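/- (Transverse convolution of surface measures on the cone.) Let n ≥ 2, let k ≥ 0 be an integer, and let r ≥ 2. Let ω₀ be a unit vector in ℝⁿ and let Γ := {ξ ∈ ℝⁿ : ∠(ξ, e₁) ≤ π/8, 1 ≤ |ξ| ≤ 2, ∠(ξ, ω₀) ≤ 1/r}. Let σ₁ be the measure on ℝ^{n+1} defined by ∫F dσ₁ = ∫_Γ F(ξ, |ξ|) dξ, and let σ₂ be the measure defined by ∫F dσ₂ = ∫_{{η : ∠(η,e₁) ≤ π/8, 2^k ≤ |η| ≤ 2^{k+1}}} F(η, −|η|) dη. Then the convolution σ₁ * σ₂ is absolutely continuous with respect to Lebesgue measure on ℝ^{n+1}, with density bounded by C r^{−(n−1)}, where C depends only on n. -/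

import Mathlib

open MeasureTheory Real InnerProductGeometry
open scoped ENNReal FourierTransform

noncomputable section

namespace ConeRestriction

/-- Spatial Euclidean space `ℝⁿ`. -/
abbrev Spc (n : ℕ) := EuclideanSpace ℝ (Fin n)

/-- The first standard basis vector `e₁` of `ℝⁿ`. -/
def e1 (n : ℕ) : Spc n :=
  if h : 0 < n then EuclideanSpace.single (⟨0, h⟩ : Fin n) (1 : ℝ) else 0

/-- The Euclidean distance on spacetime `ℝⁿ × ℝ = ℝ^{n+1}`. -/
def stDist {n : ℕ} (z w : Spc n × ℝ) : ℝ :=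
  Real.sqrt (‖z.1 - w.1‖ ^ 2 + (z.2 - w.2) ^ 2)

/-- The spatial projection of the frequency sector `2^m Σ^{red}` (the same set occurs as the
spatial projection of `2^m Σ^{blue}`). -/
def sector (n : ℕ) (m : ℤ) : Set (Spc n) :=
  {ξ | angle ξ (e1 n) ≤ π / 8 ∧ (2 : ℝ) ^ m ≤ ‖ξ‖ ∧ ‖ξ‖ ≤ (2 : ℝ) ^ (m + 1)}

/-- The region `Σ̲ = {ξ : 1/2 ≤ |ξ| ≤ 4, ∠(ξ,e₁) ≤ π/4}`. -/
def underlineSigma (n : ℕ) : Set (Spc n) :=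
  {ξ | 1 / 2 ≤ ‖ξ‖ ∧ ‖ξ‖ ≤ 4 ∧ angle ξ (e1 n) ≤ π / 4}

/-- The plane wave phase `e^{2πi(x·ξ + t|ξ|)}`. -/
def redPhase {n : ℕ} (ξ x : Spc n) (t : ℝ) : ℂ :=
  Complex.exp (2 * (π : ℂ) * Complex.I * (((inner ℝ x ξ : ℝ) + t * ‖ξ‖ : ℝ) : ℂ))

/-- General spacetime plane wave phase `e^{2πi(x·Ξ + tτ)}`. -/
def stPhase {n : ℕ} (Ξ : Spc n) (τ : ℝ) (z : Spc n × ℝ) : ℂ :=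
  Complex.exp (2 * (π : ℂ) * Complex.I * (((inner ℝ z.1 Ξ : ℝ) + z.2 * τ : ℝ) : ℂ))

section Waves

variable {n : ℕ} {H : Type*} [NormedAddCommGroup H] [InnerProductSpace ℂ H]

/-- `φ` is a red wave of frequency `2^m`, with Fourier density `f`: the spacetime Fourier
transform of `φ` is the `L²` measure `f dσ` on the piece `{(ξ,|ξ|) : ξ ∈ sector n m}` of the
forward light cone. -/
def IsRedWave (m : ℤ) (φ : Spc n → ℝ → H) (f : Spc n → H) : Prop :=
  MemLp f 2 (volume : Measure (Spc n)) ∧ (∀ ξ, ξ ∉ sector n m → f ξ = 0) ∧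
    ∀ x t, φ x t = ∫ ξ, redPhase ξ x t • f ξ

/-- `ψ` is a blue wave of frequency `2^m`, with Fourier density `g` on the backward light
cone piece `{(ξ,-|ξ|) : ξ ∈ sector n m}`. -/
def IsBlueWave (m : ℤ) (ψ : Spc n → ℝ → H) (g : Spc n → H) : Prop :=
  MemLp g 2 (volume : Measure (Spc n)) ∧ (∀ ξ, ξ ∉ sector n m → g ξ = 0) ∧
    ∀ x t, ψ x t = ∫ ξ, redPhase ξ x (-t) • g ξ

/-- The energy of a wave with Fourier density `f`; by Plancherel this equals
`‖φ(t)‖_{L²}²` for every time `t`. -/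
def waveEnergy (f : Spc n → H) : ℝ := ∫ ξ, ‖f ξ‖ ^ 2

/-- The margin of a red wave of frequency `2^m` with Fourier density `f`:
`2^{-m} dist(supp φ̂, 2^m(Σ⁺ \ Σ^{red}))`. -/
def marginRed (m : ℤ) (f : Spc n → H) : ℝ :=
  sInf {d | ∃ ξ ∈ Function.support f, ∃ η, η ∉ sector n m ∧
    d = (2 : ℝ) ^ (-m) * stDist (ξ, ‖ξ‖) (η, ‖η‖)}

/-- The margin of a blue wave of frequency `2^m` with Fourier density `g`. -/
def marginBlue (m : ℤ) (g : Spc n → H) : ℝ :=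
  sInf {d | ∃ ξ ∈ Function.support g, ∃ η, η ∉ sector n m ∧
    d = (2 : ℝ) ^ (-m) * stDist (ξ, -‖ξ‖) (η, -‖η‖)}

/-- The angular dispersion `diam {ξ/|ξ| : (ξ,τ) ∈ supp φ̂}` of a wave with density `f`. -/
def angularDispersion (f : Spc n → H) : ℝ :=
  Metric.diam ((fun ξ : Spc n => ‖ξ‖⁻¹ • ξ) '' Function.support f)

end Waves

/-- The `L^p` norm of the (tensor) product `φψ`, using `‖φ ⊗ ψ‖ = ‖φ‖ ‖ψ‖` pointwise. -/
def biLpNorm {n : ℕ} {H H' : Type*} [NormedAddCommGroup H] [NormedAddCommGroup H']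
    (φ : Spc n → ℝ → H) (ψ : Spc n → ℝ → H') (p : ℝ≥0∞) (μ : Measure (Spc n × ℝ)) : ℝ≥0∞ :=
  eLpNorm (fun z : Spc n × ℝ => ‖φ z.1 z.2‖ * ‖ψ z.1 z.2‖) p μ

section Geometry

variable {n : ℕ}

/-- The red cone `C^{red}(x₀,t₀)`. -/
def redCone (x₀ : Spc n) (t₀ : ℝ) : Set (Spc n × ℝ) :=
  {z | ∃ r : ℝ, ∃ ω ∈ underlineSigma n, ‖ω‖ = 1 ∧ z = (x₀ + r • ω, t₀ - r)}

/-- The blue cone `C^{blue}(x₀,t₀)`. -/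
def blueCone (x₀ : Spc n) (t₀ : ℝ) : Set (Spc n × ℝ) :=
  {z | ∃ r : ℝ, ∃ ω ∈ underlineSigma n, ‖ω‖ = 1 ∧ z = (x₀ + r • ω, t₀ + r)}

/-- The `r`-neighbourhood of a set in spacetime, w.r.t. the Euclidean metric on `ℝ^{n+1}`. -/
def nbhd (S : Set (Spc n × ℝ)) (r : ℝ) : Set (Spc n × ℝ) :=
  {z | ∃ w ∈ S, stDist z w ≤ r}

def redConeNbhd (x₀ : Spc n) (t₀ r : ℝ) : Set (Spc n × ℝ) := nbhd (redCone x₀ t₀) r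

def blueConeNbhd (x₀ : Spc n) (t₀ r : ℝ) : Set (Spc n × ℝ) := nbhd (blueCone x₀ t₀) r

def purpleConeNbhd (x₀ : Spc n) (t₀ r : ℝ) : Set (Spc n × ℝ) :=
  redConeNbhd x₀ t₀ r ∪ blueConeNbhd x₀ t₀ r

/-- The axis-parallel spacetime cube `Q(x₀,t₀;R)` with center `(x₀,t₀)` and side-length `R`. -/
def cube (x₀ : Spc n) (t₀ R : ℝ) : Set (Spc n × ℝ) :=
  {z | (∀ i, |z.1 i - x₀ i| ≤ R / 2) ∧ |z.2 - t₀| ≤ R / 2}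

/-- The cubical annulus `Q^{ann}(x₀,t₀;r₁,r₂)`. -/
def cubeAnn (x₀ : Spc n) (t₀ r₁ r₂ : ℝ) : Set (Spc n × ℝ) :=
  cube x₀ t₀ r₂ \ cube x₀ t₀ r₁

/-- Index set for the `2^{(n+1)j}` subcubes in `𝒬_j(Q)`. -/
abbrev QIdx (n j : ℕ) := (Fin n → Fin (2 ^ j)) × Fin (2 ^ j)

/-- The subcube of `Q(x₀,t₀;R)` in `𝒬_j(Q)` with index `v`. -/
def subCube (x₀ : Spc n) (t₀ R : ℝ) (j : ℕ) (v : QIdx n j) : Set (Spc n × ℝ) :=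
  {z | (∀ i, x₀ i - R / 2 + (v.1 i : ℝ) * (R / 2 ^ j) ≤ z.1 i ∧
          z.1 i ≤ x₀ i - R / 2 + ((v.1 i : ℝ) + 1) * (R / 2 ^ j)) ∧
    (t₀ - R / 2 + (v.2 : ℝ) * (R / 2 ^ j) ≤ z.2 ∧
      z.2 ≤ t₀ - R / 2 + ((v.2 : ℝ) + 1) * (R / 2 ^ j))}

/-- The `j`-quilt `[φ]_j = Σ_{q ∈ 𝒬_j(Q)} |φ^{(q)}| χ_q` of a wave table of depth `j` on
`Q(x₀,t₀;R)`. -/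
def quilt {n : ℕ} {H : Type*} [NormedAddCommGroup H] (x₀ : Spc n) (t₀ R : ℝ) (j : ℕ)
    (φ : QIdx n j → Spc n → ℝ → H) : Spc n × ℝ → ℝ :=
  fun z => ∑ v : QIdx n j, (subCube x₀ t₀ R j v).indicator (fun _ => ‖φ v z.1 z.2‖) z

/-- The shrunk subcube `(1-c')q` for `q ∈ 𝒬_j(Q)`. -/
def subCubeShrunk (x₀ : Spc n) (t₀ R : ℝ) (j : ℕ) (c' : ℝ) (v : QIdx n j) :
    Set (Spc n × ℝ) :=
  {z | (∀ i, |z.1 i - (x₀ i - R / 2 + ((v.1 i : ℝ) + 1 / 2) * (R / 2 ^ j))| ≤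
          (1 - c') * (R / 2 ^ j) / 2) ∧
    |z.2 - (t₀ - R / 2 + ((v.2 : ℝ) + 1 / 2) * (R / 2 ^ j))| ≤ (1 - c') * (R / 2 ^ j) / 2}

/-- The `(c',j)`-interior `I^{c',j}(Q) = ∪_{q ∈ 𝒬_j(Q)} (1-c')q`. -/
def interiorSet (x₀ : Spc n) (t₀ R : ℝ) (c' : ℝ) (j : ℕ) : Set (Spc n × ℝ) :=
  ⋃ v : QIdx n j, subCubeShrunk x₀ t₀ R j c' v

/-- The set `X(Q) = ∩_{j=C₀}^{k} I^{c 2^{-(k-j)/N}, j}(Q)`. -/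
def XSet (x₀ : Spc n) (t₀ R : ℝ) (C₀ k N : ℕ) (c : ℝ) : Set (Spc n × ℝ) :=
  ⋂ j ∈ Set.Icc C₀ k, interiorSet x₀ t₀ R (c * (2 : ℝ) ^ (-(((k - j : ℕ) : ℝ)) / N)) j

end Geometry

section DiskLocalization

variable {n : ℕ} {H : Type*} [NormedAddCommGroup H] [InnerProductSpace ℂ H]

/-- The evolution operator `U(t)`: `(U(t)f)^(ξ) = a(ξ) e^{2πit|ξ|} f̂(ξ)`. -/
def Uop (a : Spc n → ℝ) (t : ℝ) (f : Spc n → H) : Spc n → H :=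
  fun x => ∫ ξ, ((a ξ : ℂ) * redPhase ξ x t) • (𝓕 f ξ)

/-- The rescaled bump function `η_s(x) = s^{-n} η₀(x/s)`. -/
def etaScaled (η₀ : Spc n → ℝ) (s : ℝ) (x : Spc n) : ℝ := s ^ (-(n : ℝ)) * η₀ (s⁻¹ • x)

/-- The cutoff `χ_D * η_{ρ^{1-1/N}}` for the disk of radius `ρ` centered at `xD`. -/
def diskCutoff (η₀ : Spc n → ℝ) (N : ℕ) (xD : Spc n) (ρ : ℝ) (x : Spc n) : ℝ :=
  ∫ y, (Metric.closedBall xD ρ).indicator (fun _ => (1 : ℝ)) y *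
    etaScaled η₀ (ρ ^ (1 - 1 / (N : ℝ))) (x - y)

/-- The disk localization operator `P_D` for red waves of frequency `1`,
`D = D(x_D, t_D; ρ)`. -/
def PDred1 (η₀ a : Spc n → ℝ) (N : ℕ) (xD : Spc n) (tD ρ : ℝ)
    (φ : Spc n → ℝ → H) : Spc n → ℝ → H :=
  fun x t => Uop a (t - tD) (fun y => (diskCutoff η₀ N xD ρ y : ℂ) • φ y tD) x

/-- The disk localization operator `P_D` for red waves of frequency `2^j`, defined by
`P_D 𝐃_j φ := 𝐃_j P_D φ`. -/
def PDred (η₀ a : Spc n → ℝ) (N : ℕ) (j : ℤ) (xD : Spc n) (tD r : ℝ)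
    (φ : Spc n → ℝ → H) : Spc n → ℝ → H :=
  fun x t => PDred1 η₀ a N ((2 : ℝ) ^ j • xD) ((2 : ℝ) ^ j * tD) ((2 : ℝ) ^ j * r)
    (fun y s => φ ((2 : ℝ) ^ (-j) • y) ((2 : ℝ) ^ (-j) * s)) ((2 : ℝ) ^ j • x) ((2 : ℝ) ^ j * t)

/-- The disk localization operator `P_D` for blue waves of frequency `2^j`, defined by
`P_D 𝐓 φ := 𝐓 P_D φ`. -/
def PDblue (η₀ a : Spc n → ℝ) (N : ℕ) (j : ℤ) (xD : Spc n) (tD r : ℝ)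
    (ψ : Spc n → ℝ → H) : Spc n → ℝ → H :=
  fun x t => PDred η₀ a N j xD (-tD) r (fun y s => ψ y (-s)) x (-t)

end DiskLocalization

section NullForms

/-- Concrete finite dimensional complex Hilbert space. -/
abbrev CVec (d : ℕ) := EuclideanSpace ℂ (Fin d)

variable {n : ℕ}

/-- The symbol of `|□| = D₊ D₋`. -/
def boxSym (Ξ : Spc n) (τ : ℝ) : ℝ := (‖Ξ‖ + abs τ) * abs (‖Ξ‖ - abs τ)

/-- The symbol of `D₀^{β₀} D₊^{β₊} D₋^{β₋}`. -/
def fullSym (β₀ βp βm : ℝ) (Ξ : Spc n) (τ : ℝ) : ℝ :=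
  ‖Ξ‖ ^ β₀ * (‖Ξ‖ + abs τ) ^ βp * abs (‖Ξ‖ - abs τ) ^ βm

/-- `|□|^β (φψ)` where `φ, ψ` are red/blue waves with Fourier densities `f, g` (on the
forward resp. backward light cone), with values in the tensor product. -/
def nullFormRB (β : ℝ) {d₁ d₂ : ℕ} (f : Spc n → CVec d₁) (g : Spc n → CVec d₂) :
    Spc n × ℝ → EuclideanSpace ℂ (Fin d₁ × Fin d₂) :=
  fun z => (EuclideanSpace.equiv (Fin d₁ × Fin d₂) ℂ).symm fun p =>
    ∫ ξ, ∫ η, ((boxSym (ξ + η) (‖ξ‖ - ‖η‖) ^ β : ℝ) : ℂ) *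
      stPhase (ξ + η) (‖ξ‖ - ‖η‖) z * f ξ p.1 * g η p.2

/-- `|□|^β (φ ψ̄)` for the same waves. -/
def nullFormRBConj (β : ℝ) {d₁ d₂ : ℕ} (f : Spc n → CVec d₁) (g : Spc n → CVec d₂) :
    Spc n × ℝ → EuclideanSpace ℂ (Fin d₁ × Fin d₂) :=
  fun z => (EuclideanSpace.equiv (Fin d₁ × Fin d₂) ℂ).symm fun p =>
    ∫ ξ, ∫ η, ((boxSym (ξ - η) (‖ξ‖ + ‖η‖) ^ β : ℝ) : ℂ) *
      stPhase (ξ - η) (‖ξ‖ + ‖η‖) z * f ξ p.1 * (starRingEnd ℂ) (g η p.2)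

/-- One interaction term in `D₀^{β₀} D₊^{β₊} D₋^{β₋}(φψ)` for solutions of the free wave
equation, with signs `ε₁, ε₂ ∈ {±1}` for the two sheets of the light cone. -/
def interactTerm (β₀ βp βm ε₁ ε₂ : ℝ) {d₁ d₂ : ℕ}
    (f : Spc n → CVec d₁) (g : Spc n → CVec d₂)
    (z : Spc n × ℝ) (p : Fin d₁ × Fin d₂) : ℂ :=
  ∫ ξ, ∫ η, ((fullSym β₀ βp βm (ξ + η) (ε₁ * ‖ξ‖ + ε₂ * ‖η‖) : ℝ) : ℂ) *
    stPhase (ξ + η) (ε₁ * ‖ξ‖ + ε₂ * ‖η‖) z * f ξ p.1 * g η p.2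

/-- `D₀^{β₀} D₊^{β₊} D₋^{β₋}(φψ)` where `φ, ψ` are the solutions of the free wave equation
with Fourier densities `fp, fm` resp. `gp, gm` on the two sheets of the light cone. -/
def nullFormSol (β₀ βp βm : ℝ) {d₁ d₂ : ℕ} (fp fm : Spc n → CVec d₁)
    (gp gm : Spc n → CVec d₂) : Spc n × ℝ → EuclideanSpace ℂ (Fin d₁ × Fin d₂) :=
  fun z => (EuclideanSpace.equiv (Fin d₁ × Fin d₂) ℂ).symm fun p =>
    interactTerm β₀ βp βm 1 1 fp gp z p + interactTerm β₀ βp βm 1 (-1) fp gm z p +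
      interactTerm β₀ βp βm (-1) 1 fm gp z p + interactTerm β₀ βp βm (-1) (-1) fm gm z p

/-- The squared data norm `‖φ[0]‖²_{Ḣ^α}` of the solution of the free wave equation with
Fourier densities `fp, fm`. -/
def dataNormSq (α : ℝ) {d : ℕ} (fp fm : Spc n → CVec d) : ℝ :=
  ∫ ξ, ‖ξ‖ ^ (2 * α) * ‖fp ξ + fm ξ‖ ^ 2 + (2 * π) ^ 2 * ‖ξ‖ ^ (2 * α) * ‖fp ξ - fm ξ‖ ^ 2

/-- A solution of the free Schrödinger equation with Fourier density `f` on the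
paraboloid `{(ξ, |ξ|²/2)}`. -/
def schroWave {m : ℕ} (f : Spc m → ℂ) : Spc m × ℝ → ℂ :=
  fun z => ∫ ξ, Complex.exp
    (2 * (π : ℂ) * Complex.I * (((inner ℝ z.1 ξ : ℝ) + z.2 * (‖ξ‖ ^ 2 / 2) : ℝ) : ℂ)) * f ξ

end NullForms

section BilinearConstant

variable (n : ℕ)

/-- `A` is an admissible constant for the localized bilinear estimate at scale `R`. -/
def AdmissibleA (N k : ℕ) (R A : ℝ) : Prop :=
  ∀ (H H' : Type) (_ : NormedAddCommGroup H) (_ : InnerProductSpace ℂ H)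
    (_ : FiniteDimensional ℂ H) (_ : NormedAddCommGroup H') (_ : InnerProductSpace ℂ H')
    (_ : FiniteDimensional ℂ H')
    (φ : Spc n → ℝ → H) (f : Spc n → H) (ψ : Spc n → ℝ → H') (g : Spc n → H'),
    IsRedWave 0 φ f → IsBlueWave (k : ℤ) ψ g →
    1 / 100 - ((2 : ℝ) ^ k / R) ^ ((N : ℝ)⁻¹) ≤ marginRed 0 f →
    1 / 100 - ((2 : ℝ) ^ k / R) ^ ((N : ℝ)⁻¹) ≤ marginBlue (k : ℤ) g →
    ∀ (y : Spc n) (s : ℝ),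
      biLpNorm φ ψ (ENNReal.ofReal (((n : ℝ) + 3) / ((n : ℝ) + 1)))
          (volume.restrict (cube y s R)) ≤
        ENNReal.ofReal (A * Real.sqrt (waveEnergy f) * Real.sqrt (waveEnergy g))

/-- The best constant `A(R)` in the localized bilinear estimate. -/
def AConst (N k : ℕ) (R : ℝ) : ℝ :=
  sInf {A : ℝ | 0 ≤ A ∧ AdmissibleA n N k R A}

/-- The monotone envelope `Ā(R) = sup_{C₀ 2^k ≤ r ≤ R} A(r)`. -/
def AbarConst (N C₀ k : ℕ) (R : ℝ) : ℝ :=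
  sSup {a : ℝ | ∃ r : ℝ, (C₀ : ℝ) * 2 ^ k ≤ r ∧ r ≤ R ∧ a = AConst n N k r}

end BilinearConstant

/-- Convolution of two measures on spacetime `ℝ^{n+1}`. -/
def measConv {n : ℕ} (μ ν : Measure (Spc n × ℝ)) : Measure (Spc n × ℝ) :=
  Measure.map (fun q : (Spc n × ℝ) × (Spc n × ℝ) => q.1 + q.2) (μ.prod ν)


/-!
The convolution of `σ₁` with `σ₂` gives a set `A` the mass
`∫ vol {ξ ∈ Γ : u - ξ ∈ sector, ‖ξ‖ - ‖u - ξ‖ ∈ A_u} du`, where `A_u` is the slice of `A` over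
`u`. Fix `u`. Moving `ξ` along `ω₀` increases `‖ξ‖ - ‖u - ξ‖` at rate at least
`cos (π/4 + 1/2) > 0`, because `u - ξ` and `ξ` stay within angle `π/4 + 1/2` of `ω₀` (this is
the transversality of the two cone pieces). So every line parallel to `ω₀` meets the fibre in a
set of length at most `|A_u| / cos (π/4 + 1/2)`. The lines that meet the fibre at all pass
through a cross-section of side `4/r`, because `‖ξ‖ ≤ 2` and `∠(ξ, ω₀) ≤ 1/r`. By Fubini the
density is at most `4^(n-1) r^(-(n-1)) / cos (π/4 + 1/2)`.
-/

open Set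

section InnerProductSpace

variable {E F : Type*} [NormedAddCommGroup E] [InnerProductSpace ℝ E]
  [NormedAddCommGroup F] [InnerProductSpace ℝ F]

lemma mul_cos_angle_le_norm_add_smul_sub_norm (x : E) {w : E} (hw : ‖w‖ = 1) (c : ℝ) :
    c * cos (angle x w) ≤ ‖x + c • w‖ - ‖x‖ := by
  rcases eq_or_ne x 0 with rfl | hx
  · simp
  have hx : 0 < ‖x‖ := norm_pos_iff.2 hx
  have hinner : inner ℝ (x + c • w) x = ‖x‖ * (‖x‖ + c * cos (angle x w)) := by
    rw [inner_add_left, real_inner_smul_left, real_inner_self_eq_norm_sq, real_inner_comm,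
      ← cos_angle_mul_norm_mul_norm, hw]
    ring
  have hcs := real_inner_le_norm (x + c • w) x
  rw [hinner, mul_comm ‖x + c • w‖] at hcs
  linarith [le_of_mul_le_mul_left hcs hx]

lemma norm_sub_norm_smul_le_mul_angle (x : E) {w : E} (hw : ‖w‖ = 1) :
    ‖x - ‖x‖ • w‖ ≤ ‖x‖ * angle x w := by
  have hsq : ‖x - ‖x‖ • w‖ ^ 2 = 2 * ‖x‖ ^ 2 * (1 - cos (angle x w)) := by
    rw [norm_sub_sq_real, real_inner_smul_right, ← cos_angle_mul_norm_mul_norm, norm_smul, hw,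
      norm_norm]
    ring
  have hcos : 1 - angle x w ^ 2 / 2 ≤ cos (angle x w) := one_sub_sq_div_two_le_cos
  refine le_of_sq_le_sq ?_ (mul_nonneg (norm_nonneg x) (angle_nonneg x w))
  rw [hsq, mul_pow]
  nlinarith [sq_nonneg ‖x‖]

/-- By the triangle inequality for angles through `e` and `ξ + c • ω`, the vector
`u - (ξ + c • ω)` makes an angle at most `2β + θ` with `ω`, so both `‖ξ‖` and `-‖u - ξ‖` grow
along `ω`. -/
lemma cos_mul_le_norm_sub_norm_sub_of_angle_le {u ω e ξ : E} (hω : ‖ω‖ = 1) {β θ c : ℝ}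
    (hc : 0 ≤ c) (hθ : θ ≤ π / 2) (hβθ : 2 * β + θ ≤ π) (hξω : angle ξ ω ≤ θ)
    (hξ'ω : angle (ξ + c • ω) ω ≤ θ) (hξ'e : angle (ξ + c • ω) e ≤ β)
    (hη'e : angle (u - (ξ + c • ω)) e ≤ β) :
    cos (2 * β + θ) * c ≤ (‖ξ + c • ω‖ - ‖u - (ξ + c • ω)‖) - (‖ξ‖ - ‖u - ξ‖) := by
  set η' := u - (ξ + c • ω)
  have hη'ω : angle η' ω ≤ 2 * β + θ := by
    have h₁ := angle_le_angle_add_angle η' e ω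
    have h₂ := angle_le_angle_add_angle e (ξ + c • ω) ω
    rw [angle_comm e (ξ + c • ω)] at h₂
    linarith
  have hcos_ξ : 0 ≤ cos (angle ξ ω) :=
    cos_nonneg_of_mem_Icc ⟨by linarith [angle_nonneg ξ ω, pi_pos], hξω.trans hθ⟩
  have hcos_η' : cos (2 * β + θ) ≤ cos (angle η' ω) :=
    cos_le_cos_of_nonneg_of_le_pi (angle_nonneg _ _) hβθ hη'ω
  have hξ := mul_cos_angle_le_norm_add_smul_sub_norm ξ hω c
  have hη := mul_cos_angle_le_norm_add_smul_sub_norm η' hω c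
  rw [show η' + c • ω = u - ξ by simp only [η']; abel] at hη
  nlinarith [mul_nonneg hc hcos_ξ, mul_le_mul_of_nonneg_left hcos_η' hc]

/-- The fibre over `{u} × B` of the convolution of the surface measure on the forward cone over
`{ξ : ‖ξ‖ ≤ ρ, ∠(ξ, ω) ≤ θ, ∠(ξ, e) ≤ β}` with the one on the backward cone over
`{η : ∠(η, e) ≤ β}`. -/
def transverseFibre (ρ θ β : ℝ) (ω e u : E) (B : Set ℝ) : Set E :=
  {ξ | ‖ξ‖ ≤ ρ ∧ angle ξ ω ≤ θ ∧ angle ξ e ≤ β ∧ angle (u - ξ) e ≤ β ∧ ‖ξ‖ - ‖u - ξ‖ ∈ B}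

lemma preimage_transverseFibre (R : E ≃ₗᵢ[ℝ] F) (ρ θ β : ℝ) (ω e u : E) (B : Set ℝ) :
    R ⁻¹' transverseFibre ρ θ β (R ω) (R e) (R u) B = transverseFibre ρ θ β ω e u B := by
  have hangle (x y : E) : angle (R x) (R y) = angle x y := R.toLinearIsometry.angle_map x y
  ext ξ
  simp [transverseFibre, ← map_sub, hangle]

lemma measurable_angle_const [MeasurableSpace E] [BorelSpace E] (v : E) :
    Measurable fun x : E => angle x v := by
  unfold angle
  fun_prop

lemma measurableSet_transverseFibre [MeasurableSpace E] [BorelSpace E]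
    [SecondCountableTopology E] (ρ θ β : ℝ) (ω e u : E) {B : Set ℝ} (hB : MeasurableSet B) :
    MeasurableSet (transverseFibre ρ θ β ω e u B) :=
  measurableSet_le measurable_norm measurable_const |>.inter <|
    measurableSet_le (measurable_angle_const ω) measurable_const |>.inter <|
    measurableSet_le (measurable_angle_const e) measurable_const |>.inter <|
    measurableSet_le ((measurable_angle_const e).comp (measurable_const.sub measurable_id))
      measurable_const |>.inter <|
    (measurable_norm.sub (measurable_norm.comp (measurable_const.sub measurable_id))) hB

end InnerProductSpace

lemma volume_le_of_expanding_on {S B : Set ℝ} {h : ℝ → ℝ} {c : ℝ} (hc : 0 < c)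
    (hexp : ∀ t ∈ S, ∀ s ∈ S, t ≤ s → c * (s - t) ≤ h s - h t) (hmaps : MapsTo h S B) :
    volume S ≤ ENNReal.ofReal c⁻¹ * volume B := by
  have hanti : AntilipschitzWith (Real.toNNReal c⁻¹) (fun x : S => h x) := by
    refine AntilipschitzWith.of_le_mul_dist fun x y => ?_
    rw [Real.coe_toNNReal _ (inv_nonneg.2 hc.le), Subtype.dist_eq, Real.dist_eq, Real.dist_eq,
      inv_mul_eq_div, le_div_iff₀ hc, mul_comm]
    rcases le_total (y : ℝ) x with hyx | hxy
    · have := hexp y y.2 x x.2 hyx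
      rwa [abs_of_nonneg (sub_nonneg.2 hyx), abs_of_nonneg (by nlinarith)]
    · have := hexp x x.2 y y.2 hxy
      rwa [abs_sub_comm, abs_sub_comm (h x), abs_of_nonneg (sub_nonneg.2 hxy),
        abs_of_nonneg (by nlinarith)]
  calc volume S = μH[1] (Subtype.val '' (univ : Set S)) := by
        rw [hausdorffMeasure_real, image_univ, Subtype.range_coe]
    _ = μH[1] (univ : Set S) := isometry_subtype_coe.hausdorffMeasure_image (Or.inl zero_le_one) _
    _ ≤ (Real.toNNReal c⁻¹ : ℝ≥0∞) ^ (1 : ℝ) * μH[1] ((fun x : S => h x) '' univ) :=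
        hanti.le_hausdorffMeasure_image zero_le_one _
    _ ≤ ENNReal.ofReal c⁻¹ * volume B := by
        rw [ENNReal.rpow_one, hausdorffMeasure_real]
        exact mul_le_mul_right (measure_mono (by rintro _ ⟨x, -, rfl⟩; exact hmaps x.2)) _

lemma abs_apply_succ_le_mul_angle_single {m : ℕ} (ξ : Spc (m + 1)) (i : Fin m) :
    |ξ i.succ| ≤ ‖ξ‖ * angle ξ (EuclideanSpace.single 0 1) := by
  have hcoord : ξ i.succ = (ξ - ‖ξ‖ • EuclideanSpace.single 0 1 : Spc (m + 1)) i.succ := by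
    simp [Fin.succ_ne_zero]
  rw [hcoord, ← Real.norm_eq_abs]
  exact (PiLp.norm_apply_le _ _).trans (norm_sub_norm_smul_le_mul_angle ξ (by simp))

lemma measurePreserving_toLp_cons (m : ℕ) :
    MeasurePreserving (fun p : ℝ × (Fin m → ℝ) => (WithLp.toLp 2 (Fin.cons p.1 p.2) : Spc (m + 1)))
      volume volume := by
  have hcons : (fun p : ℝ × (Fin m → ℝ) => (WithLp.toLp 2 (Fin.cons p.1 p.2) : Spc (m + 1))) =
      WithLp.toLp 2 ∘ (MeasurableEquiv.piFinSuccAbove (fun _ => ℝ) 0).symm := by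
    funext p
    simp [MeasurableEquiv.piFinSuccAbove_symm_apply, Fin.insertNthEquiv]
  exact hcons ▸ (PiLp.volume_preserving_toLp _).comp
    (volume_preserving_piFinSuccAbove (fun _ : Fin (m + 1) => ℝ) 0).symm

lemma volume_line_inter_transverseFibre_single_le {m : ℕ} {ρ θ β : ℝ} (hθ : 0 ≤ θ)
    (hβ : 0 ≤ β) (hβθ : 2 * β + θ < π / 2) (e u : Spc (m + 1)) (B : Set ℝ) (y : Fin m → ℝ) :
    volume {t | (WithLp.toLp 2 (Fin.cons t y) : Spc (m + 1)) ∈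
        transverseFibre ρ θ β (EuclideanSpace.single 0 1) e u B} ≤
      (univ.pi fun _ => Icc (-(ρ * θ)) (ρ * θ)).indicator
        (fun _ => ENNReal.ofReal (cos (2 * β + θ))⁻¹ * volume B) y := by
  set ω : Spc (m + 1) := EuclideanSpace.single 0 1
  have hshift (t s : ℝ) : (WithLp.toLp 2 (Fin.cons s y) : Spc (m + 1)) =
      WithLp.toLp 2 (Fin.cons t y) + (s - t) • ω := by
    ext j
    induction j using Fin.cases <;> simp [ω, Fin.succ_ne_zero]
  by_cases hy : y ∈ univ.pi fun _ => Icc (-(ρ * θ)) (ρ * θ)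
  · rw [indicator_of_mem hy]
    refine volume_le_of_expanding_on (cos_pos_of_mem_Ioo ⟨by linarith [pi_pos], hβθ⟩)
      (fun t ht s hs hts => ?_) fun t ht => ht.2.2.2.2
    rw [mem_ofPred_eq] at hs
    rw [hshift t s] at hs ⊢
    exact cos_mul_le_norm_sub_norm_sub_of_angle_le (by simp [ω]) (sub_nonneg.2 hts)
      (by linarith) (by linarith) ht.2.1 hs.2.1 hs.2.2.1 hs.2.2.2.1
  · rw [indicator_of_notMem hy, nonpos_iff_eq_zero, measure_eq_zero_iff_ae_notMem]
    refine Filter.Eventually.of_forall fun t ht => hy fun i _ => abs_le.1 ?_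
    have hcoord := abs_apply_succ_le_mul_angle_single (WithLp.toLp 2 (Fin.cons t y)) i
    rw [PiLp.toLp_apply, Fin.cons_succ] at hcoord
    exact hcoord.trans (mul_le_mul ht.1 ht.2.1 (angle_nonneg _ _) ((norm_nonneg _).trans ht.1))

lemma volume_transverseFibre_single_le {m : ℕ} {ρ θ β : ℝ} (hθ : 0 ≤ θ) (hβ : 0 ≤ β)
    (hβθ : 2 * β + θ < π / 2) (e u : Spc (m + 1)) {B : Set ℝ} (hB : MeasurableSet B) :
    volume (transverseFibre ρ θ β (EuclideanSpace.single 0 1) e u B) ≤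
      ENNReal.ofReal (2 * ρ * θ) ^ m * ENNReal.ofReal (cos (2 * β + θ))⁻¹ * volume B := by
  have hT := measurableSet_transverseFibre ρ θ β (EuclideanSpace.single 0 1) e u hB
  have hcons := measurePreserving_toLp_cons m
  calc _ = ∫⁻ y, volume {t | (WithLp.toLp 2 (Fin.cons t y) : Spc (m + 1)) ∈
          transverseFibre ρ θ β (EuclideanSpace.single 0 1) e u B} := by
        rw [← hcons.measure_preimage hT.nullMeasurableSet, Measure.volume_eq_prod,
          Measure.prod_apply_symm (hcons.measurable hT)]
        rfl
    _ ≤ ∫⁻ y, (univ.pi fun _ => Icc (-(ρ * θ)) (ρ * θ)).indicator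
          (fun _ => ENNReal.ofReal (cos (2 * β + θ))⁻¹ * volume B) y :=
        lintegral_mono (volume_line_inter_transverseFibre_single_le hθ hβ hβθ e u B)
    _ = ENNReal.ofReal (2 * ρ * θ) ^ m * ENNReal.ofReal (cos (2 * β + θ))⁻¹ * volume B := by
        rw [lintegral_indicator_const (MeasurableSet.univ_pi fun _ => measurableSet_Icc),
          volume_pi_pi]
        simp only [Real.volume_Icc, Finset.prod_const, Finset.card_univ, Fintype.card_fin]
        ring_nf

lemma volume_transverseFibre_le {m : ℕ} {ρ θ β : ℝ} (hθ : 0 ≤ θ) (hβ : 0 ≤ β)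
    (hβθ : 2 * β + θ < π / 2) {ω : Spc (m + 1)} (hω : ‖ω‖ = 1) (e u : Spc (m + 1)) {B : Set ℝ}
    (hB : MeasurableSet B) :
    volume (transverseFibre ρ θ β ω e u B) ≤
      ENNReal.ofReal (2 * ρ * θ) ^ m * ENNReal.ofReal (cos (2 * β + θ))⁻¹ * volume B := by
  let R := (ℝ ∙ (ω - EuclideanSpace.single 0 1))ᗮ.reflection
  have hR : R ω = EuclideanSpace.single 0 1 := Submodule.reflection_sub (by simp [hω])
  calc volume (transverseFibre ρ θ β ω e u B)
      = volume (R ⁻¹' transverseFibre ρ θ β (R ω) (R e) (R u) B) := by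
        rw [preimage_transverseFibre]
    _ = volume (transverseFibre ρ θ β (R ω) (R e) (R u) B) :=
        R.measurePreserving.measure_preimage
          (measurableSet_transverseFibre _ _ _ _ _ _ hB).nullMeasurableSet
    _ ≤ _ := hR ▸ volume_transverseFibre_single_le hθ hβ hβθ (R e) (R u) hB

lemma volume_transverseFibre_cone_le {m : ℕ} {r : ℝ} (hr : 2 ≤ r) {ω : Spc (m + 1)}
    (hω : ‖ω‖ = 1) (e u : Spc (m + 1)) {B : Set ℝ} (hB : MeasurableSet B) :
    volume (transverseFibre 2 (1 / r) (π / 8) ω e u B) ≤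
      ENNReal.ofReal (4 ^ m / cos (π / 4 + 1 / 2) * r ^ (-(m : ℝ))) * volume B := by
  have hr₀ : 0 < r := by linarith
  have hr_inv : 1 / r ≤ 1 / 2 := one_div_le_one_div_of_le two_pos hr
  have hc₀ : 0 < cos (π / 4 + 1 / 2) :=
    cos_pos_of_mem_Ioo ⟨by linarith [pi_pos], by linarith [pi_gt_three]⟩
  have hcos : cos (π / 4 + 1 / 2) ≤ cos (2 * (π / 8) + 1 / r) :=
    cos_le_cos_of_nonneg_of_le_pi (by positivity) (by linarith [pi_gt_three]) (by linarith)
  refine (volume_transverseFibre_le (by positivity) (by positivity)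
    (by linarith [pi_gt_three]) hω e u hB).trans ?_
  rw [← ENNReal.ofReal_pow (by positivity), ← ENNReal.ofReal_mul (by positivity)]
  gcongr ENNReal.ofReal ?_ * _
  rw [rpow_neg hr₀.le, rpow_natCast, show 2 * 2 * (1 / r) = 4 * r⁻¹ by ring, mul_pow, inv_pow,
    div_eq_mul_inv (4 ^ m : ℝ), mul_right_comm (4 ^ m : ℝ)]
  gcongr

lemma measurableSet_sector (n : ℕ) (m : ℤ) : MeasurableSet (sector n m) :=
  (measurableSet_le (measurable_angle_const _) measurable_const).inter
    ((measurableSet_le measurable_const measurable_norm).inter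
      (measurableSet_le measurable_norm measurable_const))

lemma measConv_map_graph_apply {n : ℕ} {f g : Spc n → ℝ} (hf : Measurable f)
    (hg : Measurable g) {Γ S : Set (Spc n)} (hΓ : MeasurableSet Γ) (hS : MeasurableSet S)
    {A : Set (Spc n × ℝ)} (hA : MeasurableSet A) :
    measConv (Measure.map (fun ξ => (ξ, f ξ)) (volume.restrict Γ))
        (Measure.map (fun η => (η, g η)) (volume.restrict S)) A =
      ∫⁻ u, volume {ξ | ξ ∈ Γ ∧ u - ξ ∈ S ∧ (u, f ξ + g (u - ξ)) ∈ A} := by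
  let Z : Set (Spc n × Spc n) := {p | p.1 ∈ Γ ∧ p.2 - p.1 ∈ S ∧ (p.2, f p.1 + g (p.2 - p.1)) ∈ A}
  have hZ : MeasurableSet Z :=
    (measurable_fst hΓ).inter ((measurable_snd.sub measurable_fst) hS |>.inter
      ((measurable_snd.prodMk ((hf.comp measurable_fst).add
        (hg.comp (measurable_snd.sub measurable_fst)))) hA))
  have hsum : Measurable fun q : (Spc n × ℝ) × (Spc n × ℝ) => q.1 + q.2 :=
    measurable_fst.add measurable_snd
  have hgraph_f : Measurable fun ξ => ((ξ, f ξ) : Spc n × ℝ) := measurable_id.prodMk hf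
  have hgraph_g : Measurable fun η => ((η, g η) : Spc n × ℝ) := measurable_id.prodMk hg
  have hmap := hsum.comp (hgraph_f.prodMap hgraph_g)
  have hshear : (fun q : (Spc n × ℝ) × (Spc n × ℝ) => q.1 + q.2) ∘
      Prod.map (fun ξ => (ξ, f ξ)) (fun η => (η, g η)) ⁻¹' A ∩ Γ ×ˢ S =
      (fun p : Spc n × Spc n => (p.1, p.1 + p.2)) ⁻¹' Z := by
    ext ⟨ξ, η⟩
    simp only [Z, mem_inter_iff, mem_preimage, mem_prod, mem_ofPred_eq, Function.comp_apply,
      Prod.map_apply, add_sub_cancel_left]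
    tauto
  rw [measConv, Measure.map_prod_map _ _ hgraph_f hgraph_g, Measure.map_map hsum
      (hgraph_f.prodMap hgraph_g), Measure.map_apply hmap hA, Measure.prod_restrict,
    Measure.restrict_apply (hmap hA), hshear,
    (measurePreserving_prod_add volume volume).measure_preimage hZ.nullMeasurableSet,
    Measure.prod_apply_symm hZ]
  rfl

lemma measConv_map_graph_le {n : ℕ} {f g : Spc n → ℝ} (hf : Measurable f) (hg : Measurable g)
    {Γ S : Set (Spc n)} (hΓ : MeasurableSet Γ) (hS : MeasurableSet S) {K : ℝ≥0∞}
    (hfibre : ∀ (u : Spc n) (B : Set ℝ), MeasurableSet B →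
      volume {ξ | ξ ∈ Γ ∧ u - ξ ∈ S ∧ f ξ + g (u - ξ) ∈ B} ≤ K * volume B)
    {A : Set (Spc n × ℝ)} (hA : MeasurableSet A) :
    measConv (Measure.map (fun ξ => (ξ, f ξ)) (volume.restrict Γ))
        (Measure.map (fun η => (η, g η)) (volume.restrict S)) A ≤ K * volume A := by
  rw [measConv_map_graph_apply hf hg hΓ hS hA, Measure.volume_eq_prod, Measure.prod_apply hA,
    ← lintegral_const_mul _ (measurable_measure_prodMk_left hA)]
  exact lintegral_mono fun u => hfibre u _ (measurable_prodMk_left hA)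

/-- Transverse convolution of surface measures on the cone.  Let `n ≥ 2`.
There is a constant `C = C(n)` such that for every `k ≥ 0`, `r ≥ 2` and unit vector `ω₀`,
the convolution of the surface measure `σ₁` of the sector
`Γ = {ξ : ∠(ξ,e₁) ≤ π/8, 1 ≤ |ξ| ≤ 2, ∠(ξ,ω₀) ≤ 1/r}` of the forward cone with the surface
measure `σ₂` of the truncated backward cone at frequencies `2^k ≤ |η| ≤ 2^{k+1}` is
absolutely continuous, with density bounded by `C r^{-(n-1)}`. -/
theorem transverse_surface_measure_convolution
    (n : ℕ) (hn : 2 ≤ n) :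
    ∃ C : ℝ, 0 < C ∧
      ∀ (k : ℕ) (r : ℝ), 2 ≤ r → ∀ (ω₀ : Spc n), ‖ω₀‖ = 1 →
      ∀ (Γ : Set (Spc n)),
        Γ = {ξ : Spc n | angle ξ (e1 n) ≤ π / 8 ∧ 1 ≤ ‖ξ‖ ∧ ‖ξ‖ ≤ 2 ∧ angle ξ ω₀ ≤ 1 / r} →
      ∀ (σ₁ σ₂ : Measure (Spc n × ℝ)),
        σ₁ = Measure.map (fun ξ : Spc n => ((ξ, ‖ξ‖) : Spc n × ℝ)) (volume.restrict Γ) →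
        σ₂ = Measure.map (fun η : Spc n => ((η, -‖η‖) : Spc n × ℝ))
              (volume.restrict (sector n (k : ℤ))) →
        measConv σ₁ σ₂ ≪ (volume : Measure (Spc n × ℝ)) ∧
        ∀ A : Set (Spc n × ℝ), MeasurableSet A →
          measConv σ₁ σ₂ A ≤ ENNReal.ofReal (C * r ^ (-((n : ℝ) - 1))) * volume A := by
  obtain ⟨m, rfl⟩ : ∃ m, n = m + 1 := ⟨n - 1, by omega⟩
  have hc₀ : 0 < cos (π / 4 + 1 / 2) :=
    cos_pos_of_mem_Ioo ⟨by linarith [pi_pos], by linarith [pi_gt_three]⟩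
  rw [show ((m + 1 : ℕ) : ℝ) - 1 = m by push_cast; ring]
  refine ⟨4 ^ m / cos (π / 4 + 1 / 2), by positivity, ?_⟩
  rintro k r hr ω₀ hω₀ _ rfl σ₁ σ₂ hσ₁ hσ₂
  have hbound (A : Set (Spc (m + 1) × ℝ)) (hA : MeasurableSet A) : measConv σ₁ σ₂ A ≤
      ENNReal.ofReal (4 ^ m / cos (π / 4 + 1 / 2) * r ^ (-(m : ℝ))) * volume A := by
    rw [hσ₁, hσ₂]
    refine measConv_map_graph_le (g := fun η => -‖η‖) measurable_norm measurable_norm.neg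
      ?_ (measurableSet_sector _ _) (fun u B hB => ?_) hA
    · exact (measurableSet_le (measurable_angle_const _) measurable_const).inter
        ((measurableSet_le measurable_const measurable_norm).inter
          ((measurableSet_le measurable_norm measurable_const).inter
            (measurableSet_le (measurable_angle_const _) measurable_const)))
    · refine (measure_mono ?_).trans (volume_transverseFibre_cone_le hr hω₀ (e1 (m + 1)) u hB)
      rintro ξ ⟨hξ, hη, hξη⟩
      exact ⟨hξ.2.2.1, hξ.2.2.2, hξ.1, hη.1, by rwa [← sub_eq_add_neg] at hξη⟩
  exact ⟨Measure.AbsolutelyContinuous.mk fun A hA h0 =>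
    le_antisymm ((hbound A hA).trans_eq (by rw [h0, mul_zero])) bot_le, hbound⟩

end ConeRestriction
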